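/- Let Φ be a root system with positive roots Φ⁺, ρ the half-sum of positive roots, and E ⊆ Φ⁺ a subset. If ρ − Σ_{α∈E} α is regular and w is the unique Weyl group element such that w⁻¹(ρ − Σ_{α∈E} α) is regular dominant, then w⁻¹(ρ − Σ_{α∈E} α) = ρ and E = Φ(w) := {α ∈ Φ⁺ : w⁻¹α ∈ Φ⁻}. -/

import Mathlib

open RealInnerProductSpace

/-- The reflection `s_α` in the hyperplane orthogonal to `α`. -/
noncomputable def sref {V : Type*} [NormedAddCommGroup V] [InnerProductSpace ℝ V]
    [FiniteDimensional ℝ V] (α : V) : V ≃ₗᵢ[ℝ] V :=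
  Submodule.reflection ((ℝ ∙ α)ᗮ)

/-- The pairing `⟨lam, α^∨⟩ = 2⟪lam, α⟫/⟪α, α⟫` of a weight `lam` with the coroot of `α`. -/
noncomputable def cpair {V : Type*} [NormedAddCommGroup V] [InnerProductSpace ℝ V]
    (α lam : V) : ℝ := 2 * ⟪lam, α⟫ / ⟪α, α⟫

/-- The Weyl group of `Φ`: the subgroup of linear isometries generated by the reflections in
the roots. -/
noncomputable def weylGroup {V : Type*} [NormedAddCommGroup V] [InnerProductSpace ℝ V]
    [FiniteDimensional ℝ V] (Φ : Finset V) : Subgroup (V ≃ₗᵢ[ℝ] V) :=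
  Subgroup.closure {g | ∃ α ∈ Φ, g = sref α}

/-!
Write `ρ - Σ_{α ∈ E} α = ½ Σ_{β ∈ Φ⁺} ±β`, the sign being `-` exactly on `E`. Since `w⁻¹`
permutes the roots, `λ := w⁻¹(ρ - Σ_{α ∈ E} α)` is half a sum of roots containing one of `±δ` for
each positive root `δ`, so `λ = ρ - σ` with `σ` the sum of the positive roots `δ` for which `-δ`
occurs. As `⟨ρ, γ^∨⟩ = 1` for simple `γ` (the simple reflection `s_γ` permutes `Φ⁺ \ {γ}`) and
`⟨σ, γ^∨⟩ ∈ ℤ`, regular dominance of `λ` forces `⟨σ, γ^∨⟩ ≤ 0` for all simple `γ`; a nonnegative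
combination of simple roots with this property has `⟪σ, σ⟫ ≤ 0`, so `σ = 0`. Hence no `-δ`
occurs: `λ = ρ`, and `w⁻¹β` is negative exactly for `β ∈ E`.
-/

section PosRep

variable {G : Type*} [AddCommGroup G] [DecidableEq G]

def posRep (P : Finset G) (x : G) : G := if x ∈ P then x else -x

theorem eq_or_eq_neg_of_posRep_eq {P : Finset G} {x y : G}
    (h : posRep P x = posRep P y) : x = y ∨ x = -y := by
  unfold posRep at h
  split_ifs at h <;> grind

theorem sum_posRep_comp_eq_sum {P : Finset G} {f : G → G}
    (hf : ∀ β ∈ P, f β ∈ P ∨ -f β ∈ P)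
    (hf_inj : ∀ β₁ ∈ P, ∀ β₂ ∈ P, f β₁ = f β₂ ∨ f β₁ = -f β₂ → β₁ = β₂) :
    ∑ β ∈ P, posRep P (f β) = ∑ β ∈ P, β := by
  have hinj : Set.InjOn (fun β => posRep P (f β)) P := fun β₁ h₁ β₂ h₂ h =>
    hf_inj β₁ h₁ β₂ h₂ (eq_or_eq_neg_of_posRep_eq h)
  have hmaps : P.image (fun β => posRep P (f β)) ⊆ P := by
    simp only [Finset.image_subset_iff, posRep]
    intro β hβ
    split_ifs with h
    exacts [h, (hf β hβ).resolve_left h]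
  -- an injective self-map of a finite set is onto
  have himage : P.image (fun β => posRep P (f β)) = P :=
    Finset.eq_of_subset_of_card_le hmaps (Finset.card_image_of_injOn hinj).ge
  conv_rhs => rw [← himage, Finset.sum_image hinj]

theorem sum_eq_sum_sub_two_nsmul_sum_filter {P : Finset G} {f : G → G}
    (hf : ∀ β ∈ P, f β ∈ P ∨ -f β ∈ P)
    (hf_inj : ∀ β₁ ∈ P, ∀ β₂ ∈ P, f β₁ = f β₂ ∨ f β₁ = -f β₂ → β₁ = β₂) :
    ∑ β ∈ P, f β = ∑ β ∈ P, β - 2 • ∑ β ∈ P with f β ∉ P, -f β := by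
  have h : ∀ β, f β = posRep P (f β) - 2 • if f β ∉ P then -f β else 0 := by
    intro β; unfold posRep; split_ifs <;> simp [two_nsmul]
  rw [← sum_posRep_comp_eq_sum hf hf_inj, Finset.sum_filter, Finset.smul_sum,
    ← Finset.sum_sub_distrib]
  exact Finset.sum_congr rfl fun β _ => h β

theorem sum_ite_mem_neg_eq {P E : Finset G} (hE : E ⊆ P) :
    ∑ β ∈ P, (if β ∈ E then -β else β) = ∑ β ∈ P, β - 2 • ∑ β ∈ E, β := by
  have h : ∀ β, (if β ∈ E then -β else β) = β - 2 • if β ∈ E then β else 0 := by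
    intro β; split_ifs <;> simp [two_nsmul]
  rw [← Finset.inter_eq_right.mpr hE, ← Finset.sum_ite_mem, Finset.inter_eq_right.mpr hE,
    Finset.smul_sum, ← Finset.sum_sub_distrib]
  exact Finset.sum_congr rfl fun β _ => h β

end PosRep

section RootSystem

variable {V : Type*} [NormedAddCommGroup V] [InnerProductSpace ℝ V]

theorem cpair_sub (α x y : V) : cpair α (x - y) = cpair α x - cpair α y := by
  simp only [cpair, inner_sub_left]; ring

theorem cpair_smul (α : V) (c : ℝ) (x : V) : cpair α (c • x) = c * cpair α x := by
  simp only [cpair, real_inner_smul_left]; ring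

theorem cpair_sum (α : V) {ι : Type*} (s : Finset ι) (f : ι → V) :
    cpair α (∑ i ∈ s, f i) = ∑ i ∈ s, cpair α (f i) := by
  simp only [cpair, sum_inner, Finset.mul_sum, Finset.sum_div]

theorem cpair_self {α : V} (hα : α ≠ 0) : cpair α α = 2 := by
  rw [cpair, mul_div_assoc, div_self (inner_self_ne_zero.mpr hα), mul_one]

theorem inner_nonpos_of_cpair_nonpos {α x : V} (h : cpair α x ≤ 0) : ⟪x, α⟫ ≤ 0 := by
  rcases eq_or_ne α 0 with rfl | hα
  · simp
  · have hαα : 0 < ⟪α, α⟫ := real_inner_self_pos.mpr hα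
    rw [cpair, div_nonpos_iff] at h
    rcases h with ⟨-, h⟩ | ⟨h, -⟩
    · linarith
    · linarith

theorem exists_nonneg_coeff_of_mem_closure {Δ : Finset V} {x : V}
    (hx : x ∈ AddSubmonoid.closure (Δ : Set V)) :
    ∃ c : V → ℝ, (∀ γ, 0 ≤ c γ) ∧ ∑ γ ∈ Δ, c γ • γ = x := by
  obtain ⟨n, -, rfl⟩ := AddSubmonoid.mem_closure_finset.mp hx
  exact ⟨fun γ => n γ, fun γ => Nat.cast_nonneg _, by simp only [Nat.cast_smul_eq_nsmul]⟩

theorem eq_zero_of_mem_closure_of_neg_mem {Δ : Finset V}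
    (hΔind : LinearIndependent ℝ (Subtype.val : {x : V // x ∈ Δ} → V)) {x : V}
    (hx : x ∈ AddSubmonoid.closure (Δ : Set V)) (hx' : -x ∈ AddSubmonoid.closure (Δ : Set V)) :
    x = 0 := by
  obtain ⟨c, hc0, rfl⟩ := exists_nonneg_coeff_of_mem_closure hx
  obtain ⟨d, hd0, hd⟩ := exists_nonneg_coeff_of_mem_closure hx'
  have hsum : ∑ γ ∈ Δ, (c γ + d γ) • γ = 0 := by
    simp only [add_smul, Finset.sum_add_distrib, hd, add_neg_cancel]
  have hcd := (linearIndepOn_finset_iff (v := id)).mp hΔind _ hsum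
  refine Finset.sum_eq_zero fun γ hγ => ?_
  rw [show c γ = 0 by linarith [hcd γ hγ, hc0 γ, hd0 γ], zero_smul]

theorem eq_zero_of_mem_closure_of_inner_nonpos {Δ : Finset V} {x : V}
    (hx : x ∈ AddSubmonoid.closure (Δ : Set V)) (hinner : ∀ γ ∈ Δ, ⟪x, γ⟫ ≤ 0) : x = 0 := by
  obtain ⟨c, hc0, hc⟩ := exists_nonneg_coeff_of_mem_closure hx
  refine real_inner_self_nonpos.mp ?_
  calc ⟪x, x⟫ = ∑ γ ∈ Δ, c γ * ⟪x, γ⟫ := by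
        nth_rewrite 2 [← hc]
        simp only [inner_sum, real_inner_smul_right]
    _ ≤ 0 := Finset.sum_nonpos fun γ hγ => mul_nonpos_of_nonneg_of_nonpos (hc0 γ) (hinner γ hγ)

variable {Φ Δ Φpos : Finset V} in
theorem neg_notMem_pos (h0 : (0 : V) ∉ Φ)
    (hΔind : LinearIndependent ℝ (Subtype.val : {x : V // x ∈ Δ} → V))
    (hΦpos : ∀ β : V, β ∈ Φpos ↔ β ∈ Φ ∧ β ∈ AddSubmonoid.closure (Δ : Set V))
    {β : V} (hβ : β ∈ Φpos) : -β ∉ Φpos := fun hβ' => by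
  obtain ⟨hβΦ, hβcl⟩ := (hΦpos β).mp hβ
  rw [eq_zero_of_mem_closure_of_neg_mem hΔind hβcl ((hΦpos _).mp hβ').2] at hβΦ
  exact h0 hβΦ

end RootSystem

section Reflection

variable {V : Type*} [NormedAddCommGroup V] [InnerProductSpace ℝ V] [FiniteDimensional ℝ V]

theorem sref_apply (α x : V) : sref α x = x - cpair α x • α := by
  rw [sref, Submodule.reflection_orthogonal_apply, Submodule.reflection_singleton_apply, cpair,
    real_inner_self_eq_norm_sq, real_inner_comm]
  simp only [RCLike.ofReal_real_eq_id, id]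
  rw [neg_sub, ← Nat.cast_smul_eq_nsmul ℝ, smul_smul]
  congr 2
  push_cast
  ring

theorem sref_sref (α x : V) : sref α (sref α x) = x := Submodule.reflection_reflection _ x

theorem sref_self {α : V} (hα : α ≠ 0) : sref α α = -α := by
  rw [sref_apply, cpair_self hα, two_smul]; abel

theorem neg_mem_of_mem {Φ : Finset V} (h0 : (0 : V) ∉ Φ)
    (hrefl : ∀ α ∈ Φ, ∀ β ∈ Φ, sref α β ∈ Φ) {β : V} (hβ : β ∈ Φ) : -β ∈ Φ := by
  rw [← sref_self fun h => h0 (h ▸ hβ)]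
  exact hrefl β hβ β hβ

theorem weylGroup_apply_mem {Φ : Finset V} (hrefl : ∀ α ∈ Φ, ∀ β ∈ Φ, sref α β ∈ Φ)
    {w : V ≃ₗᵢ[ℝ] V} (hw : w ∈ weylGroup Φ) {β : V} (hβ : β ∈ Φ) : w β ∈ Φ := by
  induction hw using Subgroup.closure_induction'' generalizing β with
  | mem g hg => obtain ⟨α, hα, rfl⟩ := hg; exact hrefl α hα β hβ
  | inv_mem g hg =>
      obtain ⟨α, hα, rfl⟩ := hg
      rw [show (sref α)⁻¹ = sref α from Submodule.reflection_inv]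
      exact hrefl α hα β hβ
  | one => exact hβ
  | mul g h _ _ hg hh => exact hg (hh hβ)

end Reflection

section PositiveRoots

variable {V : Type*} [NormedAddCommGroup V] [InnerProductSpace ℝ V] [FiniteDimensional ℝ V]
  {Φ Δ Φpos : Finset V}

theorem sref_mem_pos (hrefl : ∀ α ∈ Φ, ∀ β ∈ Φ, sref α β ∈ Φ)
    (hred : ∀ α ∈ Φ, ∀ t : ℝ, t • α ∈ Φ → t = 1 ∨ t = -1)
    (hΔΦ : (Δ : Set V) ⊆ Φ)
    (hΔind : LinearIndependent ℝ (Subtype.val : {x : V // x ∈ Δ} → V))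
    (hΦpos : ∀ β : V, β ∈ Φpos ↔ β ∈ Φ ∧ β ∈ AddSubmonoid.closure (Δ : Set V))
    (hΔgen : ∀ β ∈ Φ, β ∈ Φpos ∨ -β ∈ Φpos)
    {γ δ : V} (hγ : γ ∈ Δ) (hδ : δ ∈ Φpos) (hδγ : δ ≠ γ) : sref γ δ ∈ Φpos := by
  classical
  obtain ⟨hδΦ, hδcl⟩ := (hΦpos δ).mp hδ
  refine (hΔgen _ (hrefl γ (hΔΦ hγ) δ hδΦ)).resolve_right fun hneg => hδγ ?_
  obtain ⟨c, hc0, hcδ⟩ := exists_nonneg_coeff_of_mem_closure hδcl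
  obtain ⟨d, hd0, hd⟩ := exists_nonneg_coeff_of_mem_closure ((hΦpos _).mp hneg).2
  -- `δ - sref γ δ` is a multiple of `γ`, so the coefficients of `δ` off `γ` vanish
  have hsum :
      ∑ η ∈ Δ, (c η + d η) • η = ∑ η ∈ Δ, (if η = γ then cpair γ δ else 0) • η := by
    simp only [add_smul, Finset.sum_add_distrib, hcδ, hd, sref_apply, ite_smul, zero_smul,
      Finset.sum_ite_eq', hγ, if_true]
    abel
  have hc : ∀ η ∈ Δ, η ≠ γ → c η = 0 := fun η hη hηγ => by
    have := (linearIndepOn_finset_iffₛ (v := id)).mp hΔind _ _ hsum η hη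
    rw [if_neg hηγ] at this
    linarith [hc0 η, hd0 η]
  have hδ_eq : ∑ η ∈ Δ, c η • η = c γ • γ :=
    Finset.sum_eq_single_of_mem γ hγ fun η hη hηγ => by rw [hc η hη hηγ, zero_smul]
  rw [← hcδ, hδ_eq] at hδΦ ⊢
  rcases hred γ (hΔΦ hγ) (c γ) hδΦ with h | h
  · rw [h, one_smul]
  · linarith [hc0 γ]

theorem cpair_sum_pos_eq_two (h0 : (0 : V) ∉ Φ)
    (hrefl : ∀ α ∈ Φ, ∀ β ∈ Φ, sref α β ∈ Φ)
    (hred : ∀ α ∈ Φ, ∀ t : ℝ, t • α ∈ Φ → t = 1 ∨ t = -1)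
    (hΔΦ : (Δ : Set V) ⊆ Φ)
    (hΔind : LinearIndependent ℝ (Subtype.val : {x : V // x ∈ Δ} → V))
    (hΦpos : ∀ β : V, β ∈ Φpos ↔ β ∈ Φ ∧ β ∈ AddSubmonoid.closure (Δ : Set V))
    (hΔgen : ∀ β ∈ Φ, β ∈ Φpos ∨ -β ∈ Φpos)
    {γ : V} (hγ : γ ∈ Δ) : cpair γ (∑ β ∈ Φpos, β) = 2 := by
  classical
  have hγ0 : γ ≠ 0 := fun h => h0 (h ▸ hΔΦ hγ)
  have hγpos : γ ∈ Φpos := (hΦpos γ).mpr ⟨hΔΦ hγ, AddSubmonoid.subset_closure hγ⟩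
  have hmaps : ∀ δ ∈ Φpos.erase γ, sref γ δ ∈ Φpos.erase γ := fun δ hδ => by
    obtain ⟨hδγ, hδ⟩ := Finset.mem_erase.mp hδ
    refine Finset.mem_erase.mpr
      ⟨fun h => ?_, sref_mem_pos hrefl hred hΔΦ hΔind hΦpos hΔgen hγ hδ hδγ⟩
    rw [← sref_sref γ δ, h, sref_self hγ0] at hδ
    exact neg_notMem_pos h0 hΔind hΦpos hγpos hδ
  -- `sref γ` permutes the positive roots other than `γ`
  have hperm : ∑ δ ∈ Φpos.erase γ, sref γ δ = ∑ δ ∈ Φpos.erase γ, δ :=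
    Finset.sum_nbij' (sref γ) (sref γ) hmaps hmaps (fun δ _ => sref_sref γ δ)
      (fun δ _ => sref_sref γ δ) fun _ _ => rfl
  have hsref : sref γ (∑ β ∈ Φpos, β) = ∑ β ∈ Φpos, β - (2 : ℝ) • γ := by
    rw [map_sum, ← Finset.add_sum_erase _ _ hγpos, ← Finset.add_sum_erase _ (fun β => β) hγpos,
      hperm, sref_self hγ0, two_smul]
    abel
  rw [sref_apply, sub_right_inj] at hsref
  exact smul_left_injective ℝ hγ0 hsref

end PositiveRoots

section Dominance

variable {V : Type*} [NormedAddCommGroup V] [InnerProductSpace ℝ V] {Φ Δ Φpos : Finset V}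

theorem eq_empty_of_cpair_sub_sum_pos (h0 : (0 : V) ∉ Φ)
    (hint : ∀ α ∈ Φ, ∀ β ∈ Φ, ∃ z : ℤ, cpair α β = z)
    (hΔΦ : (Δ : Set V) ⊆ Φ)
    (hΔind : LinearIndependent ℝ (Subtype.val : {x : V // x ∈ Δ} → V))
    (hΦpos : ∀ β : V, β ∈ Φpos ↔ β ∈ Φ ∧ β ∈ AddSubmonoid.closure (Δ : Set V))
    {ρ : V} (hρ : ∀ γ ∈ Δ, cpair γ ρ = 1)
    {ι : Type*} {B : Finset ι} {g : ι → V} (hg : ∀ i ∈ B, g i ∈ Φpos)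
    (hpos : ∀ γ ∈ Δ, 0 < cpair γ (ρ - ∑ i ∈ B, g i)) : B = ∅ := by
  classical
  have hcl : ∀ s ⊆ B, ∑ i ∈ s, g i ∈ AddSubmonoid.closure (Δ : Set V) := fun s hs =>
    AddSubmonoid.sum_mem _ fun i hi => ((hΦpos _).mp (hg i (hs hi))).2
  -- `⟨ρ - σ, γ^∨⟩ = 1 - ⟨σ, γ^∨⟩` is a positive integer, so `⟨σ, γ^∨⟩ ≤ 0`
  have hσ : ∑ i ∈ B, g i = 0 := by
    refine eq_zero_of_mem_closure_of_inner_nonpos (hcl B subset_rfl) fun γ hγ => ?_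
    have hσint : cpair γ (∑ i ∈ B, g i) ∈ (Int.castAddHom ℝ).range := by
      rw [cpair_sum]
      refine AddSubgroup.sum_mem _ fun i hi => ?_
      obtain ⟨z, hz⟩ := hint γ (hΔΦ hγ) (g i) ((hΦpos _).mp (hg i hi)).1
      exact ⟨z, hz.symm⟩
    obtain ⟨z, hz⟩ := hσint
    have hlt : (z : ℝ) < 1 := by
      have := hpos γ hγ
      rw [cpair_sub, hρ γ hγ, ← hz] at this
      simpa using this
    have hz0 : (z : ℝ) ≤ 0 := by exact_mod_cast Int.lt_add_one_iff.mp (by exact_mod_cast hlt)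
    exact inner_nonpos_of_cpair_nonpos (hz ▸ hz0)
  by_contra hB
  obtain ⟨i, hi⟩ := Finset.nonempty_iff_ne_empty.mpr hB
  have hneg : -g i = ∑ j ∈ B.erase i, g j :=
    neg_eq_of_add_eq_zero_right ((Finset.add_sum_erase B g hi).trans hσ)
  have hgi := (hΦpos _).mp (hg i hi)
  rw [eq_zero_of_mem_closure_of_neg_mem hΔind hgi.2 (hneg ▸ hcl _ (B.erase_subset i))] at hgi
  exact h0 hgi.1

end Dominance

section WeylAction

variable {V : Type*} [NormedAddCommGroup V] [InnerProductSpace ℝ V] [DecidableEq V]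

def signedInvImage (w : V ≃ₗᵢ[ℝ] V) (E : Finset V) (β : V) : V :=
  w⁻¹ (if β ∈ E then -β else β)

theorem signedInvImage_mem_or_neg_mem [FiniteDimensional ℝ V] {Φ Φpos : Finset V}
    (h0 : (0 : V) ∉ Φ) (hrefl : ∀ α ∈ Φ, ∀ β ∈ Φ, sref α β ∈ Φ)
    (hΔgen : ∀ β ∈ Φ, β ∈ Φpos ∨ -β ∈ Φpos) {w : V ≃ₗᵢ[ℝ] V} (hw : w ∈ weylGroup Φ)
    (E : Finset V) {β : V} (hβ : β ∈ Φ) :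
    signedInvImage w E β ∈ Φpos ∨ -signedInvImage w E β ∈ Φpos := by
  refine hΔgen _ (weylGroup_apply_mem hrefl (inv_mem hw) ?_)
  split_ifs
  exacts [neg_mem_of_mem h0 hrefl hβ, hβ]

theorem eq_of_signedInvImage_eq_or_eq_neg {P : Finset V} (hP : ∀ β ∈ P, -β ∉ P)
    (w : V ≃ₗᵢ[ℝ] V) (E : Finset V) {β₁ β₂ : V} (h₁ : β₁ ∈ P) (h₂ : β₂ ∈ P)
    (h : signedInvImage w E β₁ = signedInvImage w E β₂ ∨
      signedInvImage w E β₁ = -signedInvImage w E β₂) : β₁ = β₂ := by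
  simp only [signedInvImage, ← map_neg, EmbeddingLike.apply_eq_iff_eq] at h
  have : β₁ = β₂ ∨ β₁ = -β₂ := by split_ifs at h <;> grind
  exact this.resolve_right fun h' => hP β₂ h₂ (h' ▸ h₁)

theorem inv_apply_rho_sub_sum_eq [FiniteDimensional ℝ V] {Φ Δ Φpos : Finset V}
    (h0 : (0 : V) ∉ Φ) (hrefl : ∀ α ∈ Φ, ∀ β ∈ Φ, sref α β ∈ Φ)
    (hΔind : LinearIndependent ℝ (Subtype.val : {x : V // x ∈ Δ} → V))
    (hΦpos : ∀ β : V, β ∈ Φpos ↔ β ∈ Φ ∧ β ∈ AddSubmonoid.closure (Δ : Set V))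
    (hΔgen : ∀ β ∈ Φ, β ∈ Φpos ∨ -β ∈ Φpos)
    {ρ : V} (hρ : ρ = (2 : ℝ)⁻¹ • ∑ β ∈ Φpos, β) {E : Finset V} (hE : E ⊆ Φpos)
    {w : V ≃ₗᵢ[ℝ] V} (hw : w ∈ weylGroup Φ) :
    w⁻¹ (ρ - ∑ α ∈ E, α) =
      ρ - ∑ β ∈ Φpos with signedInvImage w E β ∉ Φpos, -signedInvImage w E β := by
  have hsigned : ρ - ∑ α ∈ E, α = (2 : ℝ)⁻¹ • ∑ β ∈ Φpos, (if β ∈ E then -β else β) := by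
    rw [sum_ite_mem_neg_eq hE, hρ]; module
  have hsum := sum_eq_sum_sub_two_nsmul_sum_filter
    (fun β hβ => signedInvImage_mem_or_neg_mem h0 hrefl hΔgen hw E ((hΦpos β).mp hβ).1)
    (fun β₁ h₁ β₂ h₂ => eq_of_signedInvImage_eq_or_eq_neg
      (fun β => neg_notMem_pos h0 hΔind hΦpos) w E h₁ h₂)
  rw [hsigned, map_smul, map_sum]
  simp only [signedInvImage] at hsum ⊢
  rw [hsum, hρ]
  module

end WeylAction

theorem rho_minus_sum_regular_general
    {V : Type*} [NormedAddCommGroup V] [InnerProductSpace ℝ V] [FiniteDimensional ℝ V]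
    (Φ Δ Φpos : Finset V)
    -- root system axioms
    (h0 : (0 : V) ∉ Φ)
    (hrefl : ∀ α ∈ Φ, ∀ β ∈ Φ, sref α β ∈ Φ)
    (hint : ∀ α ∈ Φ, ∀ β ∈ Φ, ∃ z : ℤ, cpair α β = z)
    (hred : ∀ α ∈ Φ, ∀ t : ℝ, t • α ∈ Φ → t = 1 ∨ t = -1)
    -- Δ is a system of simple roots, with positive roots Φpos
    (hΔΦ : (Δ : Set V) ⊆ Φ)
    (hΔind : LinearIndependent ℝ (Subtype.val : {x : V // x ∈ Δ} → V))
    (hΦpos : ∀ β : V, β ∈ Φpos ↔ β ∈ Φ ∧ β ∈ AddSubmonoid.closure (Δ : Set V))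
    (hΔgen : ∀ β ∈ Φ, β ∈ Φpos ∨ -β ∈ Φpos)
    -- ρ, the half-sum of the positive roots
    (ρ : V) (hρ : ρ = (2 : ℝ)⁻¹ • ∑ β ∈ Φpos, β)
    -- E is a subset of the positive roots
    (E : Finset V) (hE : E ⊆ Φpos)
    -- w is a Weyl group element with w⁻¹(ρ - Σ_{α ∈ E} α) regular dominant
    (w : V ≃ₗᵢ[ℝ] V) (hw : w ∈ weylGroup Φ)
    (hdom : ∀ γ ∈ Δ, 0 ≤ cpair γ (w⁻¹ (ρ - ∑ α ∈ E, α)))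
    (hregw : ∀ β ∈ Φ, cpair β (w⁻¹ (ρ - ∑ α ∈ E, α)) ≠ 0) :
    w⁻¹ (ρ - ∑ α ∈ E, α) = ρ ∧
    (E : Set V) = {β : V | β ∈ Φpos ∧ -(w⁻¹ β) ∈ Φpos} := by
  classical
  have hlam := inv_apply_rho_sub_sum_eq h0 hrefl hΔind hΦpos hΔgen hρ hE hw
  have hρΔ : ∀ γ ∈ Δ, cpair γ ρ = 1 := fun γ hγ => by
    rw [hρ, cpair_smul, cpair_sum_pos_eq_two h0 hrefl hred hΔΦ hΔind hΦpos hΔgen hγ]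
    norm_num
  have hB : Φpos.filter (fun β => signedInvImage w E β ∉ Φpos) = ∅ :=
    eq_empty_of_cpair_sub_sum_pos h0 hint hΔΦ hΔind hΦpos hρΔ
      (fun β hβ => by
        obtain ⟨hβ, hβneg⟩ := Finset.mem_filter.mp hβ
        exact (signedInvImage_mem_or_neg_mem h0 hrefl hΔgen hw E
          ((hΦpos β).mp hβ).1).resolve_left hβneg)
      (fun γ hγ => hlam ▸ (hdom γ hγ).lt_of_ne' (hregw γ (hΔΦ hγ)))
  have hpos : ∀ β ∈ Φpos, signedInvImage w E β ∈ Φpos := by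
    simpa using Finset.filter_eq_empty_iff.mp hB
  refine ⟨by rw [hlam, hB, Finset.sum_empty, sub_zero], ?_⟩
  ext β
  simp only [Finset.mem_coe, Set.mem_ofPred_eq]
  refine ⟨fun hβE => ⟨hE hβE, ?_⟩, fun ⟨hβ, hβneg⟩ => ?_⟩
  · simpa [signedInvImage, hβE] using hpos β (hE hβE)
  · by_contra hβE
    exact neg_notMem_pos h0 hΔind hΦpos (by simpa [signedInvImage, hβE] using hpos β hβ) hβneg

/-- (Macdonald's lemma.)  Let `Φ` be a root system with positive roots `Φ⁺`, `ρ` the half-sum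
of positive roots, and `E ⊆ Φ⁺`.  If `ρ - Σ_{α ∈ E} α` is regular and `w` is the (unique)
Weyl group element such that `w⁻¹(ρ - Σ_{α ∈ E} α)` is regular dominant, then
`w⁻¹(ρ - Σ_{α ∈ E} α) = ρ` and `E = Φ(w) = {α ∈ Φ⁺ : w⁻¹ α ∈ Φ⁻}`. -/
theorem rho_minus_sum_regular
    {V : Type*} [NormedAddCommGroup V] [InnerProductSpace ℝ V] [FiniteDimensional ℝ V]
    (Φ Δ Φpos : Finset V)
    -- root system axioms
    (h0 : (0 : V) ∉ Φ)
    (hspan : Submodule.span ℝ (Φ : Set V) = ⊤)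
    (hrefl : ∀ α ∈ Φ, ∀ β ∈ Φ, sref α β ∈ Φ)
    (hint : ∀ α ∈ Φ, ∀ β ∈ Φ, ∃ z : ℤ, cpair α β = z)
    (hred : ∀ α ∈ Φ, ∀ t : ℝ, t • α ∈ Φ → t = 1 ∨ t = -1)
    -- Δ is a system of simple roots, with positive roots Φpos
    (hΔΦ : (Δ : Set V) ⊆ Φ)
    (hΔind : LinearIndependent ℝ (Subtype.val : {x : V // x ∈ Δ} → V))
    (hΦpos : ∀ β : V, β ∈ Φpos ↔ β ∈ Φ ∧ β ∈ AddSubmonoid.closure (Δ : Set V))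
    (hΔgen : ∀ β ∈ Φ, β ∈ Φpos ∨ -β ∈ Φpos)
    -- ρ, the half-sum of the positive roots
    (ρ : V) (hρ : ρ = (2 : ℝ)⁻¹ • ∑ β ∈ Φpos, β)
    -- E is a subset of the positive roots
    (E : Finset V) (hE : E ⊆ Φpos)
    -- ρ - Σ_{α ∈ E} α is regular
    (hregμ : ∀ β ∈ Φ, cpair β (ρ - ∑ α ∈ E, α) ≠ 0)
    -- w is a Weyl group element with w⁻¹(ρ - Σ_{α ∈ E} α) regular dominant
    (w : V ≃ₗᵢ[ℝ] V) (hw : w ∈ weylGroup Φ)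
    (hdom : ∀ γ ∈ Δ, 0 ≤ cpair γ (w⁻¹ (ρ - ∑ α ∈ E, α)))
    (hregw : ∀ β ∈ Φ, cpair β (w⁻¹ (ρ - ∑ α ∈ E, α)) ≠ 0) :
    w⁻¹ (ρ - ∑ α ∈ E, α) = ρ ∧
    (E : Set V) = {β : V | β ∈ Φpos ∧ -(w⁻¹ β) ∈ Φpos} :=
  rho_minus_sum_regular_general Φ Δ Φpos h0 hrefl hint hred hΔΦ hΔind hΦpos hΔgen ρ hρ E hE w hw
    hdom hregw
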